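/- arXiv:2508.00182 — 2 statements merged into one kernel-verified Lean document; each statement's English description precedes it below -/
import Mathlib

section
/- Let d ≥ 2 and let (a_𝐧)_{𝐧∈ℕ₀^d} be complex numbers such that a_𝐧 ≠ 0 only if 𝐧 = 𝟎 or 𝐧 ∈ B_k for some k ∈ ℕ₀. Suppose the d-multiple series ∑_{𝐧∈ℕ₀^d} a_𝐧 converges over rectangles to S, i.e., the rectangular partial sums ∑_{𝐧<𝐍} a_𝐧 tend to S as min_j N^j → ∞. Then for every permutation (j_1,…,j_d) of (1,…,d) the iterated sum ∑_{n^{j_1}≥0} ( ∑_{n^{j_2}≥0} ( ⋯ ( ∑_{n^{j_d}≥0} a_{n^1,…,n^d} ) ) ) converges to S; in particular each inner series has only finitely many nonzero terms. -/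
open Filter Finset Topology MeasureTheory
open scoped Classical

noncomputable section

instance : TopologicalSpace (ZMod 2) := ⊥
instance : DiscreteTopology (ZMod 2) := ⟨rfl⟩

/-- The dyadic (Cantor) group `𝔾`: sequences of elements of `ℤ/2ℤ`
with coordinatewise addition modulo 2, Tychonoff topology. -/
abbrev DyadicGroup : Type := ℕ → ZMod 2

instance : MeasurableSpace DyadicGroup := borel _
instance : BorelSpace DyadicGroup := ⟨rfl⟩

/-- `𝔾^d`. -/
abbrev GD (d : ℕ) : Type := Fin d → DyadicGroup

/-- One-dimensional Walsh function `W_n` in the Paley enumeration: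
`W_n(g) = ∏_k (-1)^(g_k n_k)`. -/
def walsh (n : ℕ) (g : DyadicGroup) : ℝ :=
  ∏ k ∈ Finset.range n, if n.testBit k ∧ g k = 1 then (-1 : ℝ) else 1

/-- `d`-dimensional Walsh function `W_𝐧(𝐠) = ∏ W_{n^l}(g^l)`. -/
def walshD {d : ℕ} (n : Fin d → ℕ) (g : GD d) : ℝ :=
  ∏ l, walsh (n l) (g l)

/-- The dyadic interval `Δ^{(k)}_m` of rank `k`. -/
def dyadicInterval (k m : ℕ) : Set DyadicGroup :=
  {g | ∀ t < k, g t = if m.testBit (k - 1 - t) then 1 else 0}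

/-- The dyadic cube `Δ^{(k)}_𝐦 = Δ^{(k)}_{m^1} × ⋯ × Δ^{(k)}_{m^d}`. -/
def dyadicCube {d : ℕ} (k : ℕ) (m : Fin d → ℕ) : Set (GD d) :=
  {g | ∀ l, g l ∈ dyadicInterval k (m l)}

/-- The canonical point of `Δ^{(k)}_m`. -/
def intervalPoint (k m : ℕ) : DyadicGroup :=
  fun t => if t < k ∧ m.testBit (k - 1 - t) then 1 else 0

/-- The canonical point of `Δ^{(k)}_𝐦`. -/
def cubePoint {d : ℕ} (k : ℕ) (m : Fin d → ℕ) : GD d :=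
  fun l => intervalPoint k (m l)

/-- `W^{(k)}_{n,m}`: the (constant, for `n < 2^k`) value of `W_n` on `Δ^{(k)}_m`. -/
def walshVal (k n m : ℕ) : ℝ := walsh n (intervalPoint k m)

/-- `W^{(k)}_{𝐧𝐦}`: the (constant, for `𝐧 < 2^k·𝟏`) value of `W_𝐧` on `Δ^{(k)}_𝐦`. -/
def walshValD {d : ℕ} (k : ℕ) (n m : Fin d → ℕ) : ℝ := walshD n (cubePoint k m)

/-- The box `{𝐧 : 𝐧 < 𝐍}` as a finset. -/
def boxLt {d : ℕ} (N : Fin d → ℕ) : Finset (Fin d → ℕ) :=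
  Fintype.piFinset fun l => Finset.range (N l)

/-- The box `{0,…,2^k−1}^d` as a set. -/
def box (d k : ℕ) : Set (Fin d → ℕ) := {m | ∀ l, m l < 2 ^ k}

/-- The rectangular partial sum `S_𝐍(𝐠)` of the Walsh series with coefficients `a`. -/
def walshPartialSum {d : ℕ} (a : (Fin d → ℕ) → ℂ) (N : Fin d → ℕ) (g : GD d) : ℂ :=
  ∑ n ∈ boxLt N, a n * (walshD n g : ℂ)

/-- Convergence over rectangles: `S_𝐍(𝐠) → S` as `min_j N^j → ∞`. -/
def ConvergesOverRectangles {d : ℕ} (a : (Fin d → ℕ) → ℂ) (g : GD d) (S : ℂ) : Prop :=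
  Tendsto (fun N : Fin d → ℕ => walshPartialSum a N g) atTop (𝓝 S)

/-- Convergence over cubes: `S_{N𝟏}(𝐠) → S` as `N → ∞`. -/
def ConvergesOverCubes {d : ℕ} (a : (Fin d → ℕ) → ℂ) (g : GD d) (S : ℂ) : Prop :=
  Tendsto (fun N : ℕ => walshPartialSum a (fun _ => N) g) atTop (𝓝 S)

/-- `λ`-convergence: `S_𝐍(𝐠) → S` as `min_j N^j → ∞` along `𝐍` with `max N^j/N^k ≤ λ`. -/
def LambdaConverges {d : ℕ} (lam : ℝ) (a : (Fin d → ℕ) → ℂ) (g : GD d) (S : ℂ) : Prop :=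
  ∀ ε : ℝ, 0 < ε → ∃ K : ℕ, ∀ N : Fin d → ℕ, (∀ j, K ≤ N j) →
    (∀ j k, (N j : ℝ) ≤ lam * N k) → ‖walshPartialSum a N g - S‖ < ε

/-- Auxiliary predicate for iterated summation of a multiple series with terms `f`;
the list gives the order of summation, *innermost index first*.  After summing the
series in the variables of the list, the remaining (partially summed) function is `g`. -/
def IterConvAux {d : ℕ} : List (Fin d) → ((Fin d → ℕ) → ℂ) → ((Fin d → ℕ) → ℂ) → Prop
  | [], f, g => f = g
  | j :: rest, f, g => ∃ h : (Fin d → ℕ) → ℂ,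
      (∀ n, Tendsto (fun T : ℕ => ∑ t ∈ Finset.range T, f (Function.update n j t))
        atTop (𝓝 (h n))) ∧ IterConvAux rest h g

/-- The multiple series with terms `f` converges iteratedly to `S`, the order of
summation being given by the list `l` (innermost index first): all successively
nested inner series converge and the full iterated sum equals `S`. -/
def IterConverges {d : ℕ} (l : List (Fin d)) (f : (Fin d → ℕ) → ℂ) (S : ℂ) : Prop :=
  ∃ g, IterConvAux l f g ∧ ∀ n, g n = S

/-- `A` is an M-set for the `d`-dimensional Walsh system under rectangular convergence. -/
def IsMSetRect {d : ℕ} (A : Set (GD d)) : Prop :=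
  ∃ a : (Fin d → ℕ) → ℂ, (∃ n, a n ≠ 0) ∧ ∀ g ∉ A, ConvergesOverRectangles a g 0

/-- `A` is an M-set for the `d`-dimensional Walsh system under convergence over cubes. -/
def IsMSetCubes {d : ℕ} (A : Set (GD d)) : Prop :=
  ∃ a : (Fin d → ℕ) → ℂ, (∃ n, a n ≠ 0) ∧ ∀ g ∉ A, ConvergesOverCubes a g 0

/-- `A` is an M-set under iterated convergence with summation order `l` (innermost first). -/
def IsMSetIter {d : ℕ} (A : Set (GD d)) (l : List (Fin d)) : Prop :=
  ∃ a : (Fin d → ℕ) → ℂ, (∃ n, a n ≠ 0) ∧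
    ∀ g ∉ A, IterConverges l (fun n => a n * (walshD n g : ℂ)) 0

/-- `A` is an M-set for the `d`-dimensional Walsh system under `λ`-convergence. -/
def IsMSetLambda {d : ℕ} (lam : ℝ) (A : Set (GD d)) : Prop :=
  ∃ a : (Fin d → ℕ) → ℂ, (∃ n, a n ≠ 0) ∧ ∀ g ∉ A, LambdaConverges lam a g 0

/-- A quasimeasure: a finitely additive function on dyadic cubes (indexed by rank
`k` and position `𝐦 < 2^k·𝟏`). -/
def IsQuasimeasure {d : ℕ} (τ : ℕ → (Fin d → ℕ) → ℂ) : Prop :=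
  ∀ k m, (∀ l, m l < 2 ^ k) →
    τ k m = ∑ σ : Fin d → Fin 2, τ (k + 1) fun l => 2 * m l + (σ l : ℕ)

/-- The quasimeasure generated by the Walsh series with coefficients `a`:
`τ(Δ^{(k)}_𝐦) = 2^{-kd} ∑_{𝐧<2^k𝟏} a_𝐧 W_𝐧(Δ^{(k)}_𝐦)`. -/
def genQM {d : ℕ} (a : (Fin d → ℕ) → ℂ) (k : ℕ) (m : Fin d → ℕ) : ℂ :=
  ((2 : ℂ) ^ (k * d))⁻¹ * ∑ n ∈ boxLt (fun _ : Fin d => 2 ^ k), a n * (walshValD k n m : ℂ)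

/-- The Fourier–Walsh coefficient `τ̂_𝐧` of a quasimeasure `τ`, computed at resolution `k`
(the value does not depend on `k` as long as `𝐧 < 2^k𝟏`). -/
def fourierCoeffAt {d : ℕ} (τ : ℕ → (Fin d → ℕ) → ℂ) (n : Fin d → ℕ) (k : ℕ) : ℂ :=
  ∑ m ∈ boxLt (fun _ : Fin d => 2 ^ k), (walshValD k n m : ℂ) * τ k m

/-- The local Fourier–Walsh coefficient `τ̂_𝐧(Δ^{(r)}_{𝐦Δ})`, computed at resolution `k ≥ r`. -/
def localCoeffAt {d : ℕ} (τ : ℕ → (Fin d → ℕ) → ℂ) (n : Fin d → ℕ)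
    (r : ℕ) (mΔ : Fin d → ℕ) (k : ℕ) : ℂ :=
  ∑ m ∈ (boxLt (fun _ : Fin d => 2 ^ k)).filter
      (fun m => dyadicCube k m ⊆ dyadicCube r mΔ),
    (walshValD k n m : ℂ) * τ k m

/-- The support of a quasimeasure: the complement of the union of all dyadic cubes `Δ₀`
such that `τ(Δ) = 0` for every dyadic cube `Δ ⊆ Δ₀`. -/
def qmSupport {d : ℕ} (τ : ℕ → (Fin d → ℕ) → ℂ) : Set (GD d) :=
  (⋃ k, ⋃ m ∈ box d k,
    ⋃ (_ : ∀ k' m', (∀ l, m' l < 2 ^ k') →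
        dyadicCube k' m' ⊆ dyadicCube k m → τ k' m' = 0),
    dyadicCube k m)ᶜ

/-- The restriction `τ|_{Δ̃}` of a quasimeasure to the dyadic cube `Δ̃ = Δ^{(r)}_{𝐦Δ}`:
`τ|_{Δ̃}(Δ) = τ(Δ̃ ∩ Δ)` (two dyadic cubes are nested or disjoint). -/
def restrictQM {d : ℕ} (τ : ℕ → (Fin d → ℕ) → ℂ) (r : ℕ) (mΔ : Fin d → ℕ) :
    ℕ → (Fin d → ℕ) → ℂ := fun k m =>
  if dyadicCube k m ⊆ dyadicCube (d := d) r mΔ then τ k m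
  else if dyadicCube (d := d) r mΔ ⊆ dyadicCube k m then τ r mΔ
  else 0

/-- `τ` is the canonical quasimeasure `τ_E` associated with a (nonempty closed) set `E`:
`τ(𝔾^d) = 1`; `τ(Δ) = 0` iff `Δ ∩ E = ∅`; and the mass of a cube meeting `E` is divided
equally among its `2^d` immediate subcubes that meet `E`. -/
def IsTauOf {d : ℕ} (E : Set (GD d)) (τ : ℕ → (Fin d → ℕ) → ℂ) : Prop :=
  IsQuasimeasure τ ∧
  τ 0 (fun _ => 0) = 1 ∧
  (∀ k m, (∀ l, m l < 2 ^ k) → (τ k m = 0 ↔ dyadicCube k m ∩ E = ∅)) ∧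
  (∀ k m, (∀ l, m l < 2 ^ k) → (dyadicCube k m ∩ E).Nonempty →
    ∀ σ : Fin d → Fin 2,
      τ (k + 1) (fun l => 2 * m l + (σ l : ℕ)) =
        if (dyadicCube (k + 1) (fun l => 2 * m l + (σ l : ℕ)) ∩ E).Nonempty then
          τ k m / ((Finset.univ.filter fun σ' : Fin d → Fin 2 =>
              (dyadicCube (k + 1) (fun l => 2 * m l + (σ' l : ℕ)) ∩ E).Nonempty).card : ℂ)
        else 0)

/-- The sequence `m_s`: `m_1 = 0`, `m_{s+1} = 2(2m_s+1)` (value at `0` is junk). -/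
def mSeq : ℕ → ℕ
  | 0 => 0
  | s + 1 => if s = 0 then 0 else 2 * (2 * mSeq s + 1)

/-- The layer `F_s^π`. -/
def Fspi {d : ℕ} (π : ℕ → (Fin d → ℕ) → Fin d → ℕ) (s : ℕ) : Set (GD d) :=
  ⋃ m ∈ box d (mSeq s), ⋃ m' ∈ box d (mSeq s),
    {g | g ∈ dyadicCube (2 * mSeq s) (fun l => 2 ^ mSeq s * m l + m' l) ∧
      walshD (fun _ => 2 ^ (2 * mSeq s)) g = walshValD (mSeq s) (π s m) m'}

/-- `F̃_s^π = F_1^π ∩ ⋯ ∩ F_s^π` (so `F̃_0^π = 𝔾^d`). -/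
def Ftil {d : ℕ} (π : ℕ → (Fin d → ℕ) → Fin d → ℕ) (s : ℕ) : Set (GD d) :=
  ⋂ k ∈ Finset.Icc 1 s, Fspi π k

/-- `F^π = ⋂_{s≥1} F_s^π`. -/
def Fpi {d : ℕ} (π : ℕ → (Fin d → ℕ) → Fin d → ℕ) : Set (GD d) :=
  ⋂ s ∈ Set.Ici 1, Fspi π s

/-- The identity element of `S` (yielding `F_s`, `F̃_s` and `F` themselves). -/
def idPerm (d : ℕ) : ℕ → (Fin d → ℕ) → Fin d → ℕ := fun _ m => m

/-- `S`: sequences `π = (π_s)` of permutations of the boxes `{0,…,2^{m_s}−1}^d`. -/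
structure PermSeq (d : ℕ) where
  p : ℕ → Equiv.Perm (Fin d → ℕ)
  maps : ∀ s, Set.MapsTo (p s) (box d (mSeq s)) (box d (mSeq s))

/-- The underlying sequence of functions of an element of `S`. -/
def PermSeq.f {d : ℕ} (π : PermSeq d) : ℕ → (Fin d → ℕ) → Fin d → ℕ := fun s => ⇑(π.p s)

/-- `π ∈ S'`: every `π_s` acts coordinatewise, `π_s(𝐦) = (π_s^1(m^1),…,π_s^d(m^d))`. -/
def PermSeq.Coordinatewise {d : ℕ} (π : PermSeq d) : Prop :=
  ∀ s, ∃ e : Fin d → ℕ → ℕ, ∀ m : Fin d → ℕ, π.p s m = fun l => e l (m l)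

/-- The Dirichlet kernel `D_N = ∑_{n<N} W_n` of the one-dimensional Walsh system. -/
def dirichlet (N : ℕ) (g : DyadicGroup) : ℝ :=
  ∑ n ∈ Finset.range N, walsh n g

/-! On the support of `a` the coordinates of an index are within a factor `2` of each other, so
once one coordinate is frozen only finitely many terms survive. Hence, as long as some variable
is not yet summed, the inner iterated sums are finite fibre sums, and summing a fibre sum over one
more variable gives the sum over the larger fibre. In the outermost summation the partial sums
`∑_{t<T}` are rectangular partial sums over boxes of sides `T` and `3T`, which tend to `S`. -/

section IteratedSums

variable {M : Type*} [AddCommMonoid M] {d : ℕ}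

def HasBalancedSupport (c : ℕ) (a : (Fin d → ℕ) → M) : Prop :=
  ∀ m, a m ≠ 0 → ∀ l l', m l ≤ c * m l'

lemma hasBalancedSupport_two_of_dyadic {a : (Fin d → ℕ) → M}
    (hsupp : ∀ n : Fin d → ℕ, a n ≠ 0 →
      n = (fun _ => 0) ∨ ∃ k : ℕ, ∀ l, 2 ^ k ≤ n l ∧ n l < 2 ^ (k + 1)) :
    HasBalancedSupport 2 a := by
  intro m hm l l'
  rcases hsupp m hm with rfl | ⟨k, hk⟩
  · simp
  · have hl := (hk l).2
    have hl' := (hk l').1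
    rw [pow_succ] at hl
    omega

def partialBox (s : Finset (Fin d)) (N n : Fin d → ℕ) : Finset (Fin d → ℕ) :=
  Fintype.piFinset fun l => if l ∈ s then range (N l) else {n l}

lemma mem_partialBox {s : Finset (Fin d)} {N n m : Fin d → ℕ} :
    m ∈ partialBox s N n ↔ ∀ l, (l ∈ s → m l < N l) ∧ (l ∉ s → m l = n l) := by
  simp only [partialBox, Fintype.mem_piFinset]
  refine forall_congr' fun l => ?_
  split_ifs with hl <;> simp [hl]

lemma partialBox_empty (N n : Fin d → ℕ) : partialBox ∅ N n = {n} := by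
  ext m
  simp [mem_partialBox, funext_iff]

lemma partialBox_univ (N n : Fin d → ℕ) : partialBox univ N n = boxLt N := by
  simp [partialBox, boxLt]

lemma partialBox_mono {s : Finset (Fin d)} {N N' : Fin d → ℕ} (h : N ≤ N') (n : Fin d → ℕ) :
    partialBox s N n ⊆ partialBox s N' n := fun m hm => by
  rw [mem_partialBox] at hm ⊢
  exact fun l => ⟨fun hl => ((hm l).1 hl).trans_le (h l), (hm l).2⟩

lemma sum_range_sum_partialBox {s : Finset (Fin d)} {j : Fin d} (hj : j ∉ s)
    (f : (Fin d → ℕ) → M) (N n : Fin d → ℕ) (T : ℕ) :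
    ∑ t ∈ range T, ∑ m ∈ partialBox s N (Function.update n j t), f m =
      ∑ m ∈ partialBox (insert j s) (Function.update N j T) n, f m := by
  rw [← sum_fiberwise_of_maps_to (g := fun m : Fin d → ℕ => m j) (t := range T)]
  · refine sum_congr rfl fun t ht => sum_congr ?_ fun _ _ => rfl
    ext m
    simp only [mem_filter, mem_partialBox, mem_insert]
    constructor
    · intro hm
      refine ⟨fun l => ?_, ?_⟩
      · rcases eq_or_ne l j with rfl | hlj
        · simpa [(hm l).2 hj] using mem_range.1 ht
        · simpa [hlj] using hm l
      · simpa using (hm j).2 hj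
    · rintro ⟨hm, rfl⟩ l
      rcases eq_or_ne l j with rfl | hlj
      · simp [hj]
      · simpa [hlj] using hm l
  · intro m hm
    simpa using (mem_partialBox.1 hm j).1 (mem_insert_self j s)

variable {c : ℕ} {a : (Fin d → ℕ) → M}

lemma finite_setOf_update_ne_zero (ha : HasBalancedSupport c a) {j l₀ : Fin d} (hl₀ : l₀ ≠ j)
    (n : Fin d → ℕ) : {t | a (Function.update n j t) ≠ 0}.Finite := by
  refine (Set.finite_Iic (c * n l₀)).subset fun t ht => ?_
  simpa [hl₀] using ha _ ht j l₀

/-- On the fibre through `n` the support of `a` lies below `c * n l₀`. -/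
lemma sum_partialBox_eq_of_le (ha : HasBalancedSupport c a) {s : Finset (Fin d)} {l₀ : Fin d}
    (hl₀ : l₀ ∉ s) {N N' n : Fin d → ℕ} (hN : ∀ l, c * n l₀ < N l) (h : N ≤ N') :
    ∑ m ∈ partialBox s N n, a m = ∑ m ∈ partialBox s N' n, a m := by
  refine sum_subset (partialBox_mono h n) fun m hm' hm => ?_
  by_contra ham
  refine hm (mem_partialBox.2 fun l => ⟨fun hl => ?_, (mem_partialBox.1 hm' l).2⟩)
  have hml₀ : m l₀ = n l₀ := (mem_partialBox.1 hm' l₀).2 hl₀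
  exact (ha m ham l l₀).trans_lt (hml₀ ▸ hN l)

lemma sum_partialBox_congr (ha : HasBalancedSupport c a) {s : Finset (Fin d)} {l₀ : Fin d}
    (hl₀ : l₀ ∉ s) {N N' n : Fin d → ℕ} (hN : ∀ l, c * n l₀ < N l)
    (hN' : ∀ l, c * n l₀ < N' l) :
    ∑ m ∈ partialBox s N n, a m = ∑ m ∈ partialBox s N' n, a m :=
  (sum_partialBox_eq_of_le ha hl₀ hN le_sup_left).trans
    (sum_partialBox_eq_of_le ha hl₀ hN' le_sup_right).symm

/-- The sum of `a` over the fibre `{m | ∀ l ∉ s, m l = n l}`, truncated at a height that loses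
nothing when `s ≠ univ` (`fiberSum_eq`); for `s = univ` the value is junk. -/
def fiberSum (c : ℕ) (a : (Fin d → ℕ) → M) (s : Finset (Fin d)) (n : Fin d → ℕ) : M :=
  ∑ m ∈ partialBox s (fun _ => c * sᶜ.sup n + 1) n, a m

lemma fiberSum_empty (c : ℕ) (a : (Fin d → ℕ) → M) : fiberSum c a ∅ = a := by
  ext n
  simp [fiberSum, partialBox_empty]

lemma fiberSum_eq (ha : HasBalancedSupport c a) {s : Finset (Fin d)} {l₀ : Fin d}
    (hl₀ : l₀ ∉ s) {N n : Fin d → ℕ} (hN : ∀ l, c * n l₀ < N l) :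
    fiberSum c a s n = ∑ m ∈ partialBox s N n, a m := by
  refine sum_partialBox_congr ha hl₀ (fun _ => Nat.lt_succ_of_le ?_) hN
  exact Nat.mul_le_mul_left c (le_sup (mem_compl.2 hl₀))

lemma sum_range_fiberSum (ha : HasBalancedSupport c a) {s : Finset (Fin d)} {j : Fin d}
    (hj : j ∉ s) {N n : Fin d → ℕ} {T : ℕ}
    (hN : ∀ t < T, ∃ l₀ ∉ s, ∀ l, c * Function.update n j t l₀ < N l) :
    ∑ t ∈ range T, fiberSum c a s (Function.update n j t) =
      ∑ m ∈ partialBox (insert j s) (Function.update N j T) n, a m := by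
  rw [← sum_range_sum_partialBox hj]
  refine sum_congr rfl fun t ht => ?_
  obtain ⟨l₀, hl₀, hlt⟩ := hN t (mem_range.1 ht)
  exact fiberSum_eq ha hl₀ hlt

variable [TopologicalSpace M]

lemma tendsto_sum_range_fiberSum (ha : HasBalancedSupport c a) {s : Finset (Fin d)} {j : Fin d}
    (hj : j ∉ s) {l₀ : Fin d} (hl₀ : l₀ ∉ insert j s) (n : Fin d → ℕ) :
    Tendsto (fun T => ∑ t ∈ range T, fiberSum c a s (Function.update n j t)) atTop
      (𝓝 (fiberSum c a (insert j s) n)) := by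
  have hl₀j : l₀ ≠ j := fun h => hl₀ (h ▸ mem_insert_self j s)
  have hl₀s : l₀ ∉ s := fun h => hl₀ (mem_insert_of_mem h)
  refine tendsto_const_nhds.congr' (eventually_atTop.2 ⟨c * n l₀ + 1, fun T hT => ?_⟩)
  dsimp only
  rw [sum_range_fiberSum ha hj (N := fun _ => c * n l₀ + 1)
    fun t _ => ⟨l₀, hl₀s, fun _ => by simp [hl₀j]⟩]
  refine fiberSum_eq ha hl₀ fun l => ?_
  rcases eq_or_ne l j with rfl | hlj
  · simpa using hT
  · simp [hlj]

lemma tendsto_sum_range_fiberSum_of_insert_eq_univ (ha : HasBalancedSupport c a)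
    {S : M} (hconv : Tendsto (fun N => ∑ m ∈ boxLt N, a m) atTop (𝓝 S))
    {s : Finset (Fin d)} {j : Fin d} (hj : j ∉ s) (hsj : insert j s = univ) (n : Fin d → ℕ) :
    Tendsto (fun T => ∑ t ∈ range T, fiberSum c a s (Function.update n j t)) atTop (𝓝 S) := by
  have hN : Tendsto (fun T => Function.update (fun _ : Fin d => c * T + T) j T) atTop atTop :=
    tendsto_atTop_atTop.2 fun b => ⟨univ.sup b, fun T hT l => by
      have hb : b l ≤ univ.sup b := le_sup (mem_univ l)
      rcases eq_or_ne l j with rfl | hlj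
      · simp only [Function.update_self]; omega
      · simp only [Function.update_of_ne hlj]; nlinarith⟩
  refine (hconv.comp hN).congr fun T => ?_
  rw [Function.comp_apply, sum_range_fiberSum ha hj (N := fun _ => c * T + T) fun t ht =>
    ⟨j, hj, fun _ => by simp only [Function.update_self]; nlinarith⟩, hsj, partialBox_univ]

end IteratedSums

theorem iterConvAux_fiberSum {d c : ℕ} {a : (Fin d → ℕ) → ℂ} {S : ℂ}
    (ha : HasBalancedSupport c a)
    (hconv : Tendsto (fun N => ∑ m ∈ boxLt N, a m) atTop (𝓝 S)) (rest : List (Fin d)) :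
    ∀ (j : Fin d) (s : Finset (Fin d)), (j :: rest).Nodup → (∀ k, k ∈ s ↔ k ∉ j :: rest) →
      IterConvAux (j :: rest) (fiberSum c a s) (fun _ => S) := by
  induction rest with
  | nil =>
    intro j s _ hs
    have hsj : insert j s = univ := eq_univ_of_forall fun k => by
      by_cases hk : k = j <;> simp_all
    refine ⟨fun _ => S, fun n => ?_, rfl⟩
    exact tendsto_sum_range_fiberSum_of_insert_eq_univ ha hconv (by simp [hs]) hsj n
  | cons j' rest ih =>
    intro j s hnd hs
    simp only [List.nodup_cons, List.mem_cons, not_or] at hnd hs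
    refine ⟨fiberSum c a (insert j s), fun n => ?_, ih j' _ ?_ fun k => ?_⟩
    · have hj : j ∉ s := by simp [hs]
      exact tendsto_sum_range_fiberSum ha hj (l₀ := j') (by simp [hs, Ne.symm hnd.1.1]) n
    · simpa using hnd.2
    · by_cases hk : k = j <;> simp_all
/-- If all nonzero terms of a `d`-multiple numerical series have indices in
`{𝟎} ∪ ⋃_k B_k` and the series converges over rectangles to `S`, then it converges to `S`
iteratedly in every order of iterated summation; in particular each inner series has only
finitely many nonzero terms. -/
theorem statement0 (d : ℕ) (hd : 2 ≤ d) (a : (Fin d → ℕ) → ℂ) (S : ℂ)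
    (hsupp : ∀ n : Fin d → ℕ, a n ≠ 0 →
      n = (fun _ => 0) ∨ ∃ k : ℕ, ∀ l, 2 ^ k ≤ n l ∧ n l < 2 ^ (k + 1))
    (hconv : Tendsto (fun N : Fin d → ℕ => ∑ n ∈ boxLt N, a n) atTop (𝓝 S)) :
    (∀ (j : Fin d) (n : Fin d → ℕ), {t : ℕ | a (Function.update n j t) ≠ 0}.Finite) ∧
    (∀ l : List (Fin d), l.Nodup → (∀ j, j ∈ l) → IterConverges l a S) := by
  have ha := hasBalancedSupport_two_of_dyadic hsupp
  have : Nontrivial (Fin d) := Fin.nontrivial_iff_two_le.2 hd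
  refine ⟨fun j n => ?_, fun l hnd hcov => ?_⟩
  · obtain ⟨l₀, hl₀⟩ := exists_ne j
    exact finite_setOf_update_ne_zero ha hl₀ n
  · obtain ⟨j, rest, rfl⟩ := List.exists_cons_of_ne_nil (List.ne_nil_of_mem (hcov ⟨0, by omega⟩))
    refine ⟨fun _ => S, ?_, fun _ => rfl⟩
    simpa [fiberSum_empty] using iterConvAux_fiberSum ha hconv rest j ∅ hnd (by simp [hcov])
end
end

section
/- Let (a_𝐧)_{𝐧∈ℕ₀^d} be the coefficients of a d-multiple Walsh series and let τ be the quasimeasure generated by this series. Let w ∈ ℕ₀ and let Δ* be a dyadic cube of rank w such that τ(Δ) = 0 for every dyadic cube Δ ⊆ Δ*. Then the rectangular partial sums satisfy S_{2^w𝐌}(𝐠) = 0 for every 𝐠 ∈ Δ* and every 𝐌 ∈ ℕ^d, where 2^w𝐌 = (2^w M^1,…,2^w M^d). -/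
open Filter Finset Topology MeasureTheory
open scoped Classical

noncomputable section

/-!
Walsh inversion, `a_𝐧 = ∑_𝐦 W^{(k)}_{𝐧𝐦} τ(Δ^{(k)}_𝐦)` for `𝐧 < 2^k𝟏`, turns the partial sum
into `S_𝐍(𝐠) = ∑_𝐦 τ(Δ^{(k)}_𝐦) ∏_l D_{N^l}(x_𝐦^l + g^l)`, where `x_𝐦` is a point of
`Δ^{(k)}_𝐦` and `D_N` the Dirichlet kernel. Take `k ≥ w` with `2^w M^l ≤ 2^k`. Subcubes of `Δ*`
contribute nothing since `τ` vanishes on them. For any other cube, `x_𝐦 + 𝐠` has a digit `1` at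
some place `t < w` of some coordinate, and there the kernel vanishes:
`D_{2^w M} = (∑_{q<M} W_{2^w q}) D_{2^w}` and `D_{2^w}(z) = ∏_{t<w} (1 + (-1)^{z_t})`.
-/

lemma walsh_eq_prod_range {n K : ℕ} (hn : n < 2 ^ K) (g : DyadicGroup) :
    walsh n g = ∏ t ∈ range K, if n.testBit t ∧ g t = 1 then (-1 : ℝ) else 1 := by
  have extend : ∀ L, n < 2 ^ L → ∏ t ∈ range L, (if n.testBit t ∧ g t = 1 then (-1 : ℝ) else 1)
      = ∏ t ∈ range (n + K), if n.testBit t ∧ g t = 1 then (-1 : ℝ) else 1 := by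
    intro L hL
    rcases le_total L (n + K) with hle | hle
    · refine prod_subset (range_subset_range.2 hle) fun t _ ht => ?_
      have : n.testBit t = false := Nat.testBit_eq_false_of_lt
        (hL.trans_le (Nat.pow_le_pow_right two_pos (by simpa using ht)))
      simp [this]
    · symm
      refine prod_subset (range_subset_range.2 hle) fun t _ ht => ?_
      have : n.testBit t = false := Nat.testBit_eq_false_of_lt
        (Nat.lt_two_pow_self.trans_le (Nat.pow_le_pow_right two_pos (by simp at ht; omega)))
      simp [this]
  rw [walsh, extend n Nat.lt_two_pow_self, extend K hn]

lemma walsh_add (n : ℕ) (x y : DyadicGroup) : walsh n (x + y) = walsh n x * walsh n y := by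
  simp only [walsh, ← prod_mul_distrib, Pi.add_apply]
  refine prod_congr rfl fun t _ => ?_
  have sign_add : ∀ (b : Bool) (u v : ZMod 2), (if b = true ∧ u + v = 1 then (-1 : ℝ) else 1)
      = (if b = true ∧ u = 1 then -1 else 1) * if b = true ∧ v = 1 then -1 else 1 := by
    intro b u v
    obtain rfl | rfl : u = 0 ∨ u = 1 := by revert u; decide
    all_goals obtain rfl | rfl : v = 0 ∨ v = 1 := by revert v; decide
    all_goals cases b <;> simp +decide
  exact sign_add _ _ _

lemma walsh_two_pow_mul_add (q : ℕ) {w r : ℕ} (hr : r < 2 ^ w) (g : DyadicGroup) :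
    walsh (2 ^ w * q + r) g = walsh (2 ^ w * q) g * walsh r g := by
  have hK : ∀ n ≤ 2 ^ w * q + r, n < 2 ^ (2 ^ w * q + r) := fun n hn =>
    Nat.lt_two_pow_self.trans_le (Nat.pow_le_pow_right two_pos hn)
  rw [walsh_eq_prod_range (hK _ le_rfl), walsh_eq_prod_range (hK _ (Nat.le_add_right _ _)),
    walsh_eq_prod_range (hK _ (Nat.le_add_left _ _)), ← prod_mul_distrib]
  refine prod_congr rfl fun t _ => ?_
  rw [Nat.testBit_two_pow_mul_add q hr, Nat.testBit_two_pow_mul]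
  by_cases htw : t < w
  · simp [htw, not_le.2 htw]
  · simp [htw, Nat.testBit_eq_false_of_lt
      (hr.trans_le (Nat.pow_le_pow_right two_pos (not_lt.1 htw))), not_lt.1 htw]

lemma walsh_two_pow (w : ℕ) (z : DyadicGroup) :
    walsh (2 ^ w) z = if z w = 1 then -1 else 1 := by
  rw [walsh_eq_prod_range (Nat.pow_lt_pow_right one_lt_two (Nat.lt_succ_self w)),
    prod_eq_single_of_mem w (mem_range.2 (Nat.lt_succ_self w))]
  · simp
  · intro t _ htw
    simp [Ne.symm htw]

lemma dirichlet_two_pow_mul (w M : ℕ) (z : DyadicGroup) :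
    dirichlet (2 ^ w * M) z = (∑ q ∈ range M, walsh (2 ^ w * q) z) * dirichlet (2 ^ w) z := by
  induction M with
  | zero => simp [dirichlet]
  | succ M ih =>
    rw [mul_add_one, dirichlet, sum_range_add, ← dirichlet, ih, sum_range_succ, add_mul]
    congr 1
    rw [dirichlet, mul_sum]
    exact sum_congr rfl fun r hr => walsh_two_pow_mul_add M (mem_range.1 hr) z

lemma dirichlet_two_pow (w : ℕ) (z : DyadicGroup) :
    dirichlet (2 ^ w) z = ∏ t ∈ range w, (1 + if z t = 1 then -1 else 1) := by
  induction w with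
  | zero => simp [dirichlet, walsh]
  | succ w ih =>
    rw [pow_succ, dirichlet_two_pow_mul, ih, prod_range_succ, sum_range_succ, sum_range_one,
      mul_zero, mul_one, walsh_two_pow, mul_comm]
    simp [walsh]

lemma dirichlet_two_pow_eq_zero {w t : ℕ} (ht : t < w) {z : DyadicGroup} (hz : z t = 1) :
    dirichlet (2 ^ w) z = 0 := by
  rw [dirichlet_two_pow]
  exact prod_eq_zero (mem_range.2 ht) (by norm_num [hz])

lemma dirichlet_two_pow_zero (w : ℕ) : dirichlet (2 ^ w) 0 = 2 ^ w := by
  norm_num [dirichlet_two_pow]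

lemma ZMod.add_eq_one_of_ne {u v : ZMod 2} (h : u ≠ v) : u + v = 1 := by
  revert u v; decide

lemma walsh_intervalPoint_comm {k n m : ℕ} (hn : n < 2 ^ k) (hm : m < 2 ^ k) :
    walsh n (intervalPoint k m) = walsh m (intervalPoint k n) := by
  rw [walsh_eq_prod_range hn, walsh_eq_prod_range hm,
    ← prod_range_reflect (fun t => if n.testBit t ∧ intervalPoint k m t = 1 then (-1 : ℝ) else 1)]
  refine prod_congr rfl fun t ht => ?_
  have ht : t < k := mem_range.1 ht
  have hreflect : k - 1 - (k - 1 - t) = t := by omega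
  simp only [intervalPoint, hreflect, ht, show k - 1 - t < k by omega, true_and]
  cases n.testBit (k - 1 - t) <;> cases m.testBit t <;> simp

lemma exists_intervalPoint_ne {k n n' : ℕ} (hn : n < 2 ^ k) (hn' : n' < 2 ^ k) (hne : n ≠ n') :
    ∃ t < k, intervalPoint k n t ≠ intervalPoint k n' t := by
  obtain ⟨i, hi⟩ : ∃ i, n.testBit i ≠ n'.testBit i := by
    by_contra! h
    exact hne (Nat.eq_of_testBit_eq h)
  have hik : i < k := by
    by_contra! hki
    have hpow := Nat.pow_le_pow_right two_pos hki
    rw [Nat.testBit_eq_false_of_lt (hn.trans_le hpow),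
      Nat.testBit_eq_false_of_lt (hn'.trans_le hpow)] at hi
    exact hi rfl
  refine ⟨k - 1 - i, by omega, ?_⟩
  have hreflect : k - 1 - (k - 1 - i) = i := by omega
  simp only [intervalPoint, hreflect, show k - 1 - i < k by omega, true_and]
  cases h : n.testBit i <;> cases h' : n'.testBit i <;> simp_all +decide

lemma dirichlet_two_pow_intervalPoint_add {k n n' : ℕ} (hn : n < 2 ^ k) (hn' : n' < 2 ^ k) :
    dirichlet (2 ^ k) (intervalPoint k n + intervalPoint k n') = if n = n' then 2 ^ k else 0 := by
  split_ifs with h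
  · rw [h, CharTwo.add_self_eq_zero, dirichlet_two_pow_zero]
  · obtain ⟨t, htk, hne⟩ := exists_intervalPoint_ne hn hn' h
    exact dirichlet_two_pow_eq_zero htk (ZMod.add_eq_one_of_ne hne)

lemma mem_boxLt {d : ℕ} {N n : Fin d → ℕ} : n ∈ boxLt N ↔ ∀ l, n l < N l := by
  simp [boxLt, Fintype.mem_piFinset]

lemma sum_walshD_mul_walshD {d : ℕ} (N : Fin d → ℕ) (x y : GD d) :
    ∑ n ∈ boxLt N, walshD n x * walshD n y = ∏ l, dirichlet (N l) (x l + y l) := by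
  simp only [dirichlet, walsh_add, prod_univ_sum, walshD, ← prod_mul_distrib]
  rfl

lemma walshValD_comm {d k : ℕ} {n m : Fin d → ℕ} (hn : ∀ l, n l < 2 ^ k)
    (hm : ∀ l, m l < 2 ^ k) : walshValD k n m = walshD m (cubePoint k n) := by
  unfold walshValD walshD cubePoint
  exact prod_congr rfl fun l _ => walsh_intervalPoint_comm (hn l) (hm l)

lemma sum_walshValD_mul_walshValD {d k : ℕ} {n n' : Fin d → ℕ} (hn : ∀ l, n l < 2 ^ k)
    (hn' : ∀ l, n' l < 2 ^ k) :
    ∑ m ∈ boxLt (fun _ : Fin d => 2 ^ k), walshValD k n m * walshValD k n' m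
      = if n = n' then 2 ^ (k * d) else 0 := by
  rw [sum_congr rfl fun m hm => by
      rw [walshValD_comm hn (mem_boxLt.1 hm), walshValD_comm hn' (mem_boxLt.1 hm)],
    sum_walshD_mul_walshD]
  simp only [cubePoint, dirichlet_two_pow_intervalPoint_add (hn _) (hn' _), prod_ite_zero,
    mem_univ, forall_const, ← funext_iff, prod_const, card_univ, Fintype.card_fin, pow_mul]

lemma sum_walshValD_mul_genQM {d k : ℕ} (a : (Fin d → ℕ) → ℂ) {n : Fin d → ℕ}
    (hn : ∀ l, n l < 2 ^ k) :
    ∑ m ∈ boxLt (fun _ : Fin d => 2 ^ k), (walshValD k n m : ℂ) * genQM a k m = a n := by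
  have orthogonality : ∀ n' ∈ boxLt (fun _ : Fin d => 2 ^ k),
      ∑ m ∈ boxLt (fun _ : Fin d => 2 ^ k), (walshValD k n m : ℂ) * walshValD k n' m
        = if n = n' then 2 ^ (k * d) else 0 := fun n' hn' => by
    have h := sum_walshValD_mul_walshValD hn (mem_boxLt.1 hn')
    split_ifs at h ⊢ <;> exact_mod_cast h
  have hswap : ∑ m ∈ boxLt (fun _ : Fin d => 2 ^ k), (walshValD k n m : ℂ) * genQM a k m
      = (2 ^ (k * d))⁻¹ * ∑ n' ∈ boxLt (fun _ : Fin d => 2 ^ k), a n' *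
          ∑ m ∈ boxLt (fun _ : Fin d => 2 ^ k), (walshValD k n m : ℂ) * walshValD k n' m := by
    simp only [genQM, mul_sum]
    rw [sum_comm]
    exact sum_congr rfl fun _ _ => sum_congr rfl fun _ _ => by ring
  rw [hswap, sum_congr rfl fun n' hn' => by rw [orthogonality n' hn']]
  simp only [mul_ite, mul_zero, sum_ite_eq, if_pos (mem_boxLt.2 hn)]
  field_simp

lemma walshPartialSum_eq_sum_genQM {d k : ℕ} (a : (Fin d → ℕ) → ℂ) {N : Fin d → ℕ}
    (hN : ∀ l, N l ≤ 2 ^ k) (g : GD d) :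
    walshPartialSum a N g = ∑ m ∈ boxLt (fun _ : Fin d => 2 ^ k),
      genQM a k m * ∏ l, (dirichlet (N l) (intervalPoint k (m l) + g l) : ℂ) := by
  have kernel : ∀ m, ∑ n ∈ boxLt N, (walshValD k n m : ℂ) * walshD n g
      = ∏ l, (dirichlet (N l) (intervalPoint k (m l) + g l) : ℂ) := fun m => by
    exact_mod_cast sum_walshD_mul_walshD N (cubePoint k m) g
  calc walshPartialSum a N g
      = ∑ n ∈ boxLt N, (∑ m ∈ boxLt (fun _ : Fin d => 2 ^ k),
          (walshValD k n m : ℂ) * genQM a k m) * walshD n g :=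
        sum_congr rfl fun n hn => by
          rw [sum_walshValD_mul_genQM a fun l => (mem_boxLt.1 hn l).trans_le (hN l)]
    _ = ∑ m ∈ boxLt (fun _ : Fin d => 2 ^ k),
          genQM a k m * ∑ n ∈ boxLt N, (walshValD k n m : ℂ) * walshD n g := by
        simp only [sum_mul, mul_sum]
        rw [sum_comm]
        exact sum_congr rfl fun _ _ => sum_congr rfl fun _ _ => by ring
    _ = _ := by simp only [kernel]

lemma dyadicCube_subset_of_intervalPoint_eq {d w k : ℕ} (hwk : w ≤ k) {m mΔ : Fin d → ℕ}
    {g : GD d} (hg : g ∈ dyadicCube w mΔ) (h : ∀ l, ∀ t < w, intervalPoint k (m l) t = g l t) :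
    dyadicCube k m ⊆ dyadicCube w mΔ := by
  intro x hx l t ht
  rw [← hg l t ht, ← h l t ht, hx l t (ht.trans_le hwk)]
  simp [intervalPoint, ht.trans_le hwk]

theorem statement4_general (d : ℕ) (a : (Fin d → ℕ) → ℂ)
    (w : ℕ) (mΔ : Fin d → ℕ)
    (h0 : ∀ (k : ℕ) (m : Fin d → ℕ), (∀ l, m l < 2 ^ k) →
      dyadicCube k m ⊆ dyadicCube w mΔ → genQM a k m = 0) :
    ∀ g ∈ dyadicCube w mΔ, ∀ M : Fin d → ℕ, (∀ l, 1 ≤ M l) →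
      walshPartialSum a (fun l => 2 ^ w * M l) g = 0 := by
  intro g hg M _
  set k := w + ∑ l, M l
  have hN : ∀ l, 2 ^ w * M l ≤ 2 ^ k := fun l => by
    rw [pow_add]
    exact Nat.mul_le_mul_left _ ((single_le_sum (fun _ _ => Nat.zero_le _) (mem_univ l)).trans
      Nat.lt_two_pow_self.le)
  rw [walshPartialSum_eq_sum_genQM a hN g]
  refine sum_eq_zero fun m hm => ?_
  by_cases hagree : ∀ l, ∀ t < w, intervalPoint k (m l) t = g l t
  · rw [h0 k m (mem_boxLt.1 hm)
      (dyadicCube_subset_of_intervalPoint_eq (Nat.le_add_right _ _) hg hagree), zero_mul]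
  · push Not at hagree
    obtain ⟨l, t, htw, hne⟩ := hagree
    have hkernel : dirichlet (2 ^ w * M l) (intervalPoint k (m l) + g l) = 0 := by
      rw [dirichlet_two_pow_mul, dirichlet_two_pow_eq_zero htw (ZMod.add_eq_one_of_ne hne),
        mul_zero]
    rw [prod_eq_zero (mem_univ l) (by rw [hkernel, Complex.ofReal_zero]), mul_zero]

/-- if the quasimeasure `τ` generated by a Walsh series vanishes on every
dyadic subcube of a dyadic cube `Δ*` of rank `w`, then `S_{2^w𝐌}(𝐠) = 0` for every
`𝐠 ∈ Δ*` and every `𝐌 ∈ ℕ^d`. -/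
theorem statement4 (d : ℕ) (hd : 2 ≤ d) (a : (Fin d → ℕ) → ℂ)
    (w : ℕ) (mΔ : Fin d → ℕ) (hmΔ : ∀ l, mΔ l < 2 ^ w)
    (h0 : ∀ (k : ℕ) (m : Fin d → ℕ), (∀ l, m l < 2 ^ k) →
      dyadicCube k m ⊆ dyadicCube w mΔ → genQM a k m = 0) :
    ∀ g ∈ dyadicCube w mΔ, ∀ M : Fin d → ℕ, (∀ l, 1 ≤ M l) →
      walshPartialSum a (fun l => 2 ^ w * M l) g = 0 :=
  statement4_general d a w mΔ h0
end
end
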